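/- The entanglement generated from a state via an incoherent operation is bounded above by its logarithmic coherence number: let ρ^S be a density matrix on ℂ^d, let |0⟩⟨0|^A be the fixed-basis incoherent pure state on an ancilla ℂ^d, and let Λ^{SA} be a completely positive trace-preserving map on SA admitting a Kraus representation by incoherent Kraus operators (with respect to the product basis). Then L_E(Λ^{SA}(ρ^S ⊗ |0⟩⟨0|^A)) ≤ L_C(ρ^S). -/

import Mathlib

open scoped BigOperators ComplexOrder Matrix

open Classical in
/-- Coherence rank: number of nonzero coordinates in the fixed basis. -/
noncomputable def cohRank {ι : Type*} [Fintype ι] (ψ : ι → ℂ) : ℕ :=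
  (Finset.univ.filter fun i => ψ i ≠ 0).card

/-- Logarithmic coherence rank. -/
noncomputable def logCohRank {ι : Type*} [Fintype ι] (ψ : ι → ℂ) : ℝ :=
  Real.logb 2 (cohRank ψ)

/-- A density matrix: positive semidefinite with trace one. -/
def IsDensity {ι : Type*} [Fintype ι] (ρ : Matrix ι ι ℂ) : Prop :=
  ρ.PosSemidef ∧ ρ.trace = 1

/-- A pure-state decomposition ρ = ∑ pᵢ |ψᵢ⟩⟨ψᵢ| with pᵢ > 0, ∑ pᵢ = 1 and ψᵢ unit vectors. -/
def IsDecomp {ι : Type*} [Fintype ι] (ρ : Matrix ι ι ℂ) {n : ℕ}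
    (p : Fin n → ℝ) (ψ : Fin n → ι → ℂ) : Prop :=
  (∀ i, 0 < p i) ∧ (∑ i, p i = 1) ∧ (∀ i, ∑ x, ‖ψ i x‖ ^ 2 = 1) ∧
    ρ = ∑ i, (p i : ℂ) • Matrix.vecMulVec (ψ i) (star (ψ i))

/-- Logarithmic coherence number via the convex roof construction. -/
noncomputable def logCohNum {ι : Type*} [Fintype ι] (ρ : Matrix ι ι ℂ) : ℝ :=
  sInf { x | ∃ (n : ℕ) (p : Fin n → ℝ) (ψ : Fin n → ι → ℂ),
    IsDecomp ρ p ψ ∧ x = ∑ i, p i * logCohRank (ψ i) }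

/-- Logarithm of the Schmidt rank of a bipartite vector (rank of its coefficient matrix). -/
noncomputable def logSchmidtRank {ι κ : Type*} [Fintype ι] [Fintype κ]
    (ψ : ι × κ → ℂ) : ℝ :=
  Real.logb 2 ((Matrix.of fun i j => ψ (i, j)).rank)

/-- Logarithmic Schmidt number via the convex roof construction. -/
noncomputable def logSchmidtNum {ι κ : Type*} [Fintype ι] [Fintype κ]
    (ρ : Matrix (ι × κ) (ι × κ) ℂ) : ℝ :=
  sInf { x | ∃ (n : ℕ) (p : Fin n → ℝ) (ψ : Fin n → ι × κ → ℂ),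
    IsDecomp ρ p ψ ∧ x = ∑ i, p i * logSchmidtRank (ψ i) }

/-- An incoherent Kraus operator maps diagonal matrices to diagonal matrices under δ ↦ KδK†. -/
def IsIncoherentKraus {ι : Type*} [Fintype ι] (K : Matrix ι ι ℂ) : Prop :=
  ∀ δ : Matrix ι ι ℂ, δ.IsDiag → (K * δ * Kᴴ).IsDiag


/-! Take any decomposition `ρ = ∑ᵢ pᵢ |ψᵢ⟩⟨ψᵢ|`. Then `Λ(ρ ⊗ |0⟩⟨0|)` decomposes into the
normalised vectors `Kₙ(ψᵢ ⊗ |0⟩)` with weights `pᵢ ‖Kₙ(ψᵢ ⊗ |0⟩)‖²`, which sum to `pᵢ` over `n`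
by trace preservation. An incoherent Kraus operator has at most one nonzero entry in each
column, so it does not increase the coherence rank, and the Schmidt rank of a bipartite vector is
at most its coherence rank in the product basis. Hence every `Kₙ(ψᵢ ⊗ |0⟩)` has Schmidt rank at
most `R_C(ψᵢ)`, and the average of `L_E` over the new decomposition is at most
`∑ᵢ pᵢ log₂ R_C(ψᵢ)`. -/

open Matrix

lemma sum_equivFin_subtype {J M : Type*} [Fintype J] [AddCommMonoid M] {P : J → Prop}
    [DecidablePred P] (F : J → M) (hF : ∀ j, ¬P j → F j = 0) :
    ∑ i, F ((Fintype.equivFin {j // P j}).symm i) = ∑ j, F j := by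
  rw [(Fintype.equivFin {j // P j}).symm.sum_comp (fun j => F j),
    ← Finset.sum_subtype (Finset.univ.filter P) (by simp) F,
    Finset.sum_filter_of_ne fun j _ h => by_contra fun hj => h (hF j hj)]

section Ensemble

variable {ι : Type*} [Fintype ι]

lemma dotProduct_star_eq_sum_norm_sq (w : ι → ℂ) :
    w ⬝ᵥ star w = ((∑ x, ‖w x‖ ^ 2 : ℝ) : ℂ) := by
  push_cast
  refine Finset.sum_congr rfl fun x _ => ?_
  rw [Pi.star_apply, Complex.star_def, Complex.mul_conj, Complex.normSq_eq_norm_sq]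
  push_cast
  rfl

lemma trace_sum_vecMulVec_star {J : Type*} [Fintype J] (w : J → ι → ℂ) :
    (∑ j, vecMulVec (w j) (star (w j))).trace = ((∑ j, ∑ x, ‖w j x‖ ^ 2 : ℝ) : ℂ) := by
  simp only [trace_sum, trace_vecMulVec, dotProduct_star_eq_sum_norm_sq, Complex.ofReal_sum]

lemma sum_norm_sq_smul (c : ℂ) (w : ι → ℂ) :
    ∑ x, ‖(c • w) x‖ ^ 2 = ‖c‖ ^ 2 * ∑ x, ‖w x‖ ^ 2 := by
  simp only [Pi.smul_apply, smul_eq_mul, norm_mul, mul_pow, Finset.mul_sum]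

lemma smul_vecMulVec_star_smul (c : ℂ) (w : ι → ℂ) :
    vecMulVec (c • w) (star (c • w)) = ((‖c‖ ^ 2 : ℝ) : ℂ) • vecMulVec w (star w) := by
  rw [star_smul, smul_vecMulVec, vecMulVec_smul, smul_smul, Complex.star_def,
    Complex.mul_conj, Complex.normSq_eq_norm_sq]

/-- The zero vectors of the ensemble `w` are discarded, since `IsDecomp` requires positive
weights. -/
lemma exists_isDecomp_of_eq_sum_vecMulVec {J : Type*} [Fintype J] {ρ : Matrix ι ι ℂ}
    (w : J → ι → ℂ) (hρ : ρ = ∑ j, vecMulVec (w j) (star (w j))) (htr : ρ.trace = 1)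
    {g : (ι → ℂ) → ℝ} (hg : ∀ (c : ℂ) v, c ≠ 0 → g (c • v) = g v) :
    ∃ (n : ℕ) (p : Fin n → ℝ) (ψ : Fin n → ι → ℂ),
      IsDecomp ρ p ψ ∧ ∑ i, p i * g (ψ i) = ∑ j, (∑ x, ‖w j x‖ ^ 2) * g (w j) := by
  classical
  set N : J → ℝ := fun j => ∑ x, ‖w j x‖ ^ 2
  have hN : ∀ j, w j ≠ 0 → 0 < N j := fun j hj => by
    obtain ⟨x, hx⟩ := Function.ne_iff.mp hj
    exact Finset.sum_pos' (fun _ _ => by positivity) ⟨x, Finset.mem_univ _, by positivity⟩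
  let e := Fintype.equivFin {j // w j ≠ 0}
  have hc : ∀ i, ((√(N (e.symm i)))⁻¹ : ℂ) ≠ 0 := fun i =>
    inv_ne_zero (Complex.ofReal_ne_zero.mpr (Real.sqrt_ne_zero'.mpr (hN _ (e.symm i).2)))
  have hnorm : ∀ i, ‖((√(N (e.symm i)))⁻¹ : ℂ)‖ ^ 2 * N (e.symm i) = 1 := fun i => by
    rw [norm_inv, Complex.norm_real, Real.norm_of_nonneg (Real.sqrt_nonneg _), inv_pow,
      Real.sq_sqrt (hN _ (e.symm i).2).le, inv_mul_cancel₀ (hN _ (e.symm i).2).ne']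
  refine ⟨_, fun i => N (e.symm i), fun i => ((√(N (e.symm i)))⁻¹ : ℂ) • w (e.symm i),
    ⟨fun i => hN _ (e.symm i).2, ?_, fun i => ?_, ?_⟩, ?_⟩
  · rw [sum_equivFin_subtype N fun j hj => by simp [N, not_not.mp hj]]
    exact_mod_cast (trace_sum_vecMulVec_star w).symm.trans (hρ ▸ htr)
  · rw [sum_norm_sq_smul, hnorm]
  · rw [hρ, ← sum_equivFin_subtype (P := fun j => w j ≠ 0) _
      fun j hj => by simp [not_not.mp hj]]
    refine Finset.sum_congr rfl fun i _ => ?_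
    rw [smul_vecMulVec_star_smul, smul_smul, ← Complex.ofReal_mul, mul_comm, hnorm,
      Complex.ofReal_one, one_smul]
  · rw [← sum_equivFin_subtype (P := fun j => w j ≠ 0) (fun j => N j * g (w j))
      fun j hj => by simp [N, not_not.mp hj]]
    exact Finset.sum_congr rfl fun i _ => by rw [hg _ _ (hc i)]

lemma IsDensity.exists_isDecomp {ρ : Matrix ι ι ℂ} (hρ : IsDensity ρ) :
    ∃ (n : ℕ) (p : Fin n → ℝ) (ψ : Fin n → ι → ℂ), IsDecomp ρ p ψ := by
  obtain ⟨m, w, hw⟩ := Matrix.posSemidef_iff_eq_sum_vecMulVec.mp hρ.1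
  obtain ⟨n, p, ψ, hdec, -⟩ :=
    exists_isDecomp_of_eq_sum_vecMulVec w hw hρ.2 (g := fun _ => 0) fun _ _ _ => rfl
  exact ⟨n, p, ψ, hdec⟩

lemma IsDecomp.eq_sum_vecMulVec {ρ : Matrix ι ι ℂ} {n : ℕ} {p : Fin n → ℝ}
    {ψ : Fin n → ι → ℂ} (h : IsDecomp ρ p ψ) :
    ρ = ∑ i, vecMulVec (((√(p i) : ℝ) : ℂ) • ψ i) (star (((√(p i) : ℝ) : ℂ) • ψ i)) := by
  rw [h.2.2.2]
  refine Finset.sum_congr rfl fun i _ => ?_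
  rw [smul_vecMulVec_star_smul, Complex.norm_real, Real.norm_of_nonneg (Real.sqrt_nonneg _),
    Real.sq_sqrt (h.1 i).le]

lemma IsDecomp.trace_eq_one {ρ : Matrix ι ι ℂ} {n : ℕ} {p : Fin n → ℝ}
    {ψ : Fin n → ι → ℂ} (h : IsDecomp ρ p ψ) : ρ.trace = 1 := by
  rw [h.eq_sum_vecMulVec, trace_sum_vecMulVec_star]
  simp only [sum_norm_sq_smul, Complex.norm_real, Real.norm_of_nonneg (Real.sqrt_nonneg _),
    Real.sq_sqrt (h.1 _).le, h.2.2.1, mul_one, h.2.1, Complex.ofReal_one]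

end Ensemble

open Kronecker in
lemma IsDecomp.kronecker_vecMulVec {ι κ : Type*} [Fintype ι] [Fintype κ] {ρ : Matrix ι ι ℂ}
    {n : ℕ} {p : Fin n → ℝ} {ψ : Fin n → ι → ℂ} (h : IsDecomp ρ p ψ) {e : κ → ℂ}
    (he : ∑ x, ‖e x‖ ^ 2 = 1) :
    IsDecomp (ρ ⊗ₖ vecMulVec e (star e)) p fun i x => ψ i x.1 * e x.2 := by
  refine ⟨h.1, h.2.1, fun i => ?_, ?_⟩
  · simp only [Fintype.sum_prod_type, norm_mul, mul_pow, ← Finset.mul_sum, he, mul_one]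
    exact h.2.2.1 i
  · ext ⟨a, b⟩ ⟨a', b'⟩
    simp only [h.2.2.2, kronecker_apply, Matrix.sum_apply, Matrix.smul_apply, vecMulVec_apply,
      Pi.star_apply, smul_eq_mul, Finset.sum_mul, star_mul']
    exact Finset.sum_congr rfl fun i _ => by ring

/-- `logCohNum` and `logSchmidtNum` are, definitionally, `convexRoof logCohRank` and
`convexRoof logSchmidtRank`. -/
noncomputable def convexRoof {ι : Type*} [Fintype ι] (g : (ι → ℂ) → ℝ) (ρ : Matrix ι ι ℂ) : ℝ :=
  sInf {x | ∃ (n : ℕ) (p : Fin n → ℝ) (ψ : Fin n → ι → ℂ),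
    IsDecomp ρ p ψ ∧ x = ∑ i, p i * g (ψ i)}

lemma convexRoof_le_convexRoof {ι κ : Type*} [Fintype ι] [Fintype κ]
    {g : (κ → ℂ) → ℝ} {f : (ι → ℂ) → ℝ} {σ : Matrix κ κ ℂ} {ρ : Matrix ι ι ℂ}
    (hρ : ∃ (n : ℕ) (p : Fin n → ℝ) (ψ : Fin n → ι → ℂ), IsDecomp ρ p ψ)
    (hg : ∀ v, 0 ≤ g v)
    (h : ∀ (n : ℕ) (p : Fin n → ℝ) (ψ : Fin n → ι → ℂ), IsDecomp ρ p ψ →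
      ∃ (n' : ℕ) (p' : Fin n' → ℝ) (ψ' : Fin n' → κ → ℂ),
        IsDecomp σ p' ψ' ∧ ∑ i, p' i * g (ψ' i) ≤ ∑ i, p i * f (ψ i)) :
    convexRoof g σ ≤ convexRoof f ρ := by
  obtain ⟨n, p, ψ, hψ⟩ := hρ
  unfold convexRoof
  refine le_csInf ⟨_, n, p, ψ, hψ, rfl⟩ ?_
  rintro _ ⟨n, p, ψ, hψ, rfl⟩
  obtain ⟨n', p', ψ', hψ', hle⟩ := h n p ψ hψ
  refine le_trans (csInf_le ⟨0, ?_⟩ ⟨n', p', ψ', hψ', rfl⟩) hle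
  rintro _ ⟨m, q, φ, hφ, rfl⟩
  exact Finset.sum_nonneg fun i _ => mul_nonneg (hφ.1 i).le (hg _)

lemma mul_vecMulVec_star_mul_conjTranspose {ι κ : Type*} [Fintype ι] (K : Matrix κ ι ℂ)
    (v : ι → ℂ) : K * vecMulVec v (star v) * Kᴴ = vecMulVec (K *ᵥ v) (star (K *ᵥ v)) := by
  rw [mul_vecMulVec, vecMulVec_mul, star_mulVec]

section Kraus

variable {ι κ : Type*} [Fintype ι] [DecidableEq ι] [Fintype κ]

lemma trace_sum_mul_mul_conjTranspose {K : κ → Matrix ι ι ℂ} (htp : ∑ k, (K k)ᴴ * K k = 1)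
    (ρ : Matrix ι ι ℂ) : (∑ k, K k * ρ * (K k)ᴴ).trace = ρ.trace := by
  simp_rw [trace_sum, trace_mul_cycle (K _), ← trace_sum, ← Finset.sum_mul, htp, one_mul]

lemma sum_sum_norm_sq_mulVec {K : κ → Matrix ι ι ℂ} (htp : ∑ k, (K k)ᴴ * K k = 1)
    (v : ι → ℂ) : ∑ k, ∑ x, ‖(K k *ᵥ v) x‖ ^ 2 = ∑ x, ‖v x‖ ^ 2 := by
  have h := trace_sum_mul_mul_conjTranspose htp (vecMulVec v (star v))
  simp_rw [mul_vecMulVec_star_mul_conjTranspose, trace_sum_vecMulVec_star] at h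
  rw [trace_vecMulVec, dotProduct_star_eq_sum_norm_sq] at h
  exact_mod_cast h

lemma IsDecomp.exists_isDecomp_sum_mul_mul_conjTranspose {ρ : Matrix ι ι ℂ} {n : ℕ}
    {p : Fin n → ℝ} {ψ : Fin n → ι → ℂ} (h : IsDecomp ρ p ψ) {K : κ → Matrix ι ι ℂ}
    (htp : ∑ k, (K k)ᴴ * K k = 1) {g f : (ι → ℂ) → ℝ}
    (hg : ∀ (c : ℂ) v, c ≠ 0 → g (c • v) = g v) (hgf : ∀ k v, g (K k *ᵥ v) ≤ f v) :
    ∃ (n' : ℕ) (p' : Fin n' → ℝ) (ψ' : Fin n' → ι → ℂ),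
      IsDecomp (∑ k, K k * ρ * (K k)ᴴ) p' ψ' ∧
        ∑ i, p' i * g (ψ' i) ≤ ∑ i, p i * f (ψ i) := by
  set φ : Fin n → ι → ℂ := fun i => ((√(p i) : ℝ) : ℂ) • ψ i
  have hφ : ∀ i, ∑ x, ‖φ i x‖ ^ 2 = p i := fun i => by
    rw [sum_norm_sq_smul, h.2.2.1, Complex.norm_real, Real.norm_of_nonneg (Real.sqrt_nonneg _),
      Real.sq_sqrt (h.1 i).le, mul_one]
  have hσ : ∑ k, K k * ρ * (K k)ᴴ =
      ∑ ik : Fin n × κ, vecMulVec (K ik.2 *ᵥ φ ik.1) (star (K ik.2 *ᵥ φ ik.1)) := by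
    simp_rw [Fintype.sum_prod_type, h.eq_sum_vecMulVec, Finset.mul_sum, Finset.sum_mul,
      mul_vecMulVec_star_mul_conjTranspose]
    exact Finset.sum_comm
  obtain ⟨n', p', ψ', hdec, hval⟩ := exists_isDecomp_of_eq_sum_vecMulVec _ hσ
    ((trace_sum_mul_mul_conjTranspose htp ρ).trans h.trace_eq_one) hg
  refine ⟨n', p', ψ', hdec, hval ▸ ?_⟩
  rw [Fintype.sum_prod_type]
  refine Finset.sum_le_sum fun i _ => ?_
  calc ∑ k, (∑ x, ‖(K k *ᵥ φ i) x‖ ^ 2) * g (K k *ᵥ φ i)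
      ≤ ∑ k, (∑ x, ‖(K k *ᵥ φ i) x‖ ^ 2) * f (ψ i) := by
        refine Finset.sum_le_sum fun k _ => mul_le_mul_of_nonneg_left ?_ (by positivity)
        rw [mulVec_smul, hg _ _ (Complex.ofReal_ne_zero.mpr (Real.sqrt_ne_zero'.mpr (h.1 i)))]
        exact hgf k (ψ i)
    _ = p i * f (ψ i) := by rw [← Finset.sum_mul, sum_sum_norm_sq_mulVec htp, hφ]

end Kraus

lemma single_one_eq_vecMulVec_star {ι : Type*} [DecidableEq ι] (i : ι) :
    Matrix.single i i (1 : ℂ) = vecMulVec (Pi.single i 1) (star (Pi.single i 1)) := by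
  ext a b
  simp only [vecMulVec_apply, single_apply, Pi.star_apply, Pi.single_apply]
  split_ifs <;> simp_all

section Coherence

variable {ι κ : Type*} [Fintype ι] [Fintype κ]

open Finset

lemma IsIncoherentKraus.eq_of_ne_zero [DecidableEq ι] {K : Matrix ι ι ℂ}
    (hK : IsIncoherentKraus K) {a b j : ι} (ha : K a j ≠ 0) (hb : K b j ≠ 0) : a = b := by
  by_contra hab
  have h := hK _ (diagonal_single j (1 : ℂ) ▸ isDiag_diagonal _) hab
  rw [single_one_eq_vecMulVec_star, mul_vecMulVec_star_mul_conjTranspose, mulVec_single_one,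
    vecMulVec_apply] at h
  exact mul_ne_zero ha (star_ne_zero.mpr hb) h

lemma IsIncoherentKraus.cohRank_mulVec_le {K : Matrix ι ι ℂ} (hK : IsIncoherentKraus K)
    (v : ι → ℂ) : cohRank (K *ᵥ v) ≤ cohRank v := by
  classical
  have hsub : ({r | (K *ᵥ v) r ≠ 0} : Finset ι) ⊆
      ({j | v j ≠ 0} : Finset ι).biUnion fun j => {r | K r j ≠ 0} := by
    intro r hr
    simp only [Finset.mem_filter, Finset.mem_univ, true_and, Finset.mem_biUnion] at hr ⊢
    obtain ⟨j, -, hj⟩ := Finset.exists_ne_zero_of_sum_ne_zero hr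
    exact ⟨j, right_ne_zero_of_mul hj, left_ne_zero_of_mul hj⟩
  calc cohRank (K *ᵥ v) ≤ _ := by unfold cohRank; convert Finset.card_le_card hsub
    _ ≤ ∑ j ∈ {j | v j ≠ 0}, #{r | K r j ≠ 0} := Finset.card_biUnion_le
    _ ≤ ∑ j ∈ {j | v j ≠ 0}, 1 := Finset.sum_le_sum fun j _ => Finset.card_le_one.mpr
        fun a ha b hb => hK.eq_of_ne_zero (Finset.mem_filter.mp ha).2 (Finset.mem_filter.mp hb).2
    _ = cohRank v := by unfold cohRank; simp

lemma cohRank_mul_apply (u : ι → ℂ) (v : κ → ℂ) :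
    cohRank (fun x : ι × κ => u x.1 * v x.2) = cohRank u * cohRank v := by
  classical
  unfold cohRank
  rw [← Finset.card_product, ← Finset.filter_product]
  congr 1
  ext x
  simp

lemma cohRank_single_one [DecidableEq ι] (i : ι) : cohRank (Pi.single i (1 : ℂ)) = 1 := by
  classical
  unfold cohRank
  rw [Finset.card_eq_one]
  exact ⟨i, by ext j; by_cases hj : j = i <;> simp [hj]⟩

/-- The coefficient matrix has at most `cohRank ψ` nonzero rows. -/
lemma rank_coeffMatrix_le_cohRank (ψ : ι × κ → ℂ) :
    (Matrix.of fun i j => ψ (i, j)).rank ≤ cohRank ψ := by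
  classical
  refine (rank_le_card_of_support_subset _ (({x | ψ x ≠ 0} : Finset (ι × κ)).image Prod.fst)
    fun i hi => ?_).trans (by unfold cohRank; convert Finset.card_image_le)
  obtain ⟨j, hj⟩ := Function.ne_iff.mp hi
  exact Finset.mem_image.mpr ⟨(i, j), by simpa using hj, rfl⟩

end Coherence

lemma logb_two_natCast_nonneg (n : ℕ) : 0 ≤ Real.logb 2 n :=
  div_nonneg (Real.log_natCast_nonneg n) (Real.log_nonneg one_le_two)

lemma logb_two_natCast_le {m n : ℕ} (h : m ≤ n) : Real.logb 2 m ≤ Real.logb 2 n := by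
  rcases m.eq_zero_or_pos with rfl | hm
  · simpa using logb_two_natCast_nonneg n
  · exact Real.logb_le_logb_of_le one_lt_two (Nat.cast_pos.mpr hm) (Nat.cast_le.mpr h)

section Schmidt

variable {ι κ : Type*} [Fintype ι] [Fintype κ]

lemma logSchmidtRank_nonneg (ψ : ι × κ → ℂ) : 0 ≤ logSchmidtRank ψ :=
  logb_two_natCast_nonneg _

lemma logSchmidtRank_smul {c : ℂ} (hc : c ≠ 0) (ψ : ι × κ → ℂ) :
    logSchmidtRank (c • ψ) = logSchmidtRank ψ := by
  unfold logSchmidtRank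
  rw [← rank_smul_of_mem_nonZeroDivisors (of fun i j => ψ (i, j))
    (mem_nonZeroDivisors_of_ne_zero hc)]
  rfl

lemma logSchmidtRank_le_logCohRank (ψ : ι × κ → ℂ) : logSchmidtRank ψ ≤ logCohRank ψ :=
  logb_two_natCast_le (rank_coeffMatrix_le_cohRank ψ)

end Schmidt

lemma IsIncoherentKraus.logCohRank_mulVec_le {ι : Type*} [Fintype ι] {K : Matrix ι ι ℂ}
    (hK : IsIncoherentKraus K) (v : ι → ℂ) : logCohRank (K *ᵥ v) ≤ logCohRank v :=
  logb_two_natCast_le (hK.cohRank_mulVec_le v)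

open Kronecker in
/-- the entanglement generated from ρ^S by attaching an incoherent
ancilla |0⟩⟨0|^A and applying a bipartite incoherent operation Λ^{SA} is bounded by
the logarithmic coherence number: L_E(Λ^{SA}(ρ^S ⊗ |0⟩⟨0|^A)) ≤ L_C(ρ^S). -/
theorem entanglement_creation_bound {d : ℕ} [NeZero d]
    (ρ : Matrix (Fin d) (Fin d) ℂ) (hρ : IsDensity ρ)
    {m : ℕ} (K : Fin m → Matrix (Fin d × Fin d) (Fin d × Fin d) ℂ)
    (hinc : ∀ n, IsIncoherentKraus (K n))
    (htp : ∑ n, (K n)ᴴ * K n = 1) :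
    logSchmidtNum
        (∑ n, K n * (ρ ⊗ₖ Matrix.single (0 : Fin d) (0 : Fin d) (1 : ℂ)) * (K n)ᴴ)
      ≤ logCohNum ρ := by
  refine convexRoof_le_convexRoof hρ.exists_isDecomp logSchmidtRank_nonneg
    fun n p ψ hψ => ?_
  rw [single_one_eq_vecMulVec_star]
  have hunit : ∑ x, ‖(Pi.single 0 1 : Fin d → ℂ) x‖ ^ 2 = 1 := by
    rw [Fintype.sum_eq_single 0 fun x hx => by simp [hx]]
    simp
  obtain ⟨n', p', ψ', hdec, hle⟩ :=
    (hψ.kronecker_vecMulVec hunit).exists_isDecomp_sum_mul_mul_conjTranspose htp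
      (fun _ v hc => logSchmidtRank_smul hc v)
      fun k v => (logSchmidtRank_le_logCohRank _).trans ((hinc k).logCohRank_mulVec_le v)
  refine ⟨n', p', ψ', hdec, hle.trans_eq ?_⟩
  simp only [logCohRank, cohRank_mul_apply, cohRank_single_one, mul_one]
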